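/- arXiv:2403.02233 — 3 statements merged into one kernel-verified Lean document; each statement's English description precedes it below -/
import Mathlib

section
/- Under the single-cluster pointwise setting, let p ∈ ℳ lie in area 𝒫_n, and let m ∈ {1,…,N} with m ≠ n. Then e_pᵀ(−∇_Q ℓ(Q))v_m = A_m(Q) · ( Σ_{a≠m,n} z_a² z_m A_a(Q)² − ( z_m z_n² (1 − A_n(Q)) A_n(Q) + z_m³ (1 − A_m(Q)) A_m(Q) ) ), where A_j(Q) = Σ_{q∈𝒰∩𝒫_j} s_{p→q}(Q). -/
/-!
Single-cluster pointwise setting (shared context for Statements 2–6 of the paper):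

`𝒫 = Fin P` is partitioned into areas `𝒫_1, …, 𝒫_N` via `area : Fin P → Fin N`
(`𝒫_j = area⁻¹ j`); `v_1, …, v_N ∈ ℝ^d` are pairwise orthogonal unit features;
`z_1, …, z_N ∈ ℝ`; the sample has columns `X_q = z_{area q} v_{area q}`; positional
encodings `e_q` are unit vectors, pairwise orthogonal and orthogonal to every feature;
`ℳ ⊂ 𝒫` is the mask set, `𝒰 = 𝒫 ∖ ℳ`; `Y = mask(X)` zeroes masked columns;
`X̃ = Y + E`; `s_{p→q}(Q)` is the softmax attention on `X̃`;
`F_p(Q) = Σ_q s_{p→q}(Q) Y_q`; `ℓ(Q) = (1/2) Σ_{p∈ℳ} ‖F_p(Q) − X_p‖²`;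
`A_m(Q) = Σ_{q ∈ 𝒰 ∩ 𝒫_m} s_{p→q}(Q)` is the unmasked area attention.

The gradient identities `e_pᵀ(−∇_Q ℓ)v` and `e_pᵀ(−∇_Q ℓ)e_q` are expressed via the
Fréchet derivative of `ℓ` paired against the rank-one directions `e_p vᵀ` resp. `e_p e_qᵀ`
(for a matrix `M` one has `aᵀ M b = ⟨M, a bᵀ⟩_F`).
-/

noncomputable section

open Finset

variable {d P N : ℕ}

/-- The sample: patch `q` carries content `z_{area q} · v_{area q}`. -/
def Xcol (area : Fin P → Fin N) (v : Fin N → Fin d → ℝ) (z : Fin N → ℝ) :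
    Fin P → Fin d → ℝ :=
  fun q i => z (area q) * v (area q) i

/-- Masked sample: masked patches are set to the value `0`. -/
def Ycol (M : Finset (Fin P)) (X : Fin P → Fin d → ℝ) : Fin P → Fin d → ℝ :=
  fun q i => if q ∈ M then 0 else X q i

/-- Positional-encoding-augmented input `X̃ = Y + E`. -/
def XtCol (e Y : Fin P → Fin d → ℝ) : Fin P → Fin d → ℝ :=
  fun q i => Y q i + e q i

/-- Softmax attention score `s_{p→q}(Q)` computed on the augmented inputs `X̃`. -/
def attScore (Xt : Fin P → Fin d → ℝ) (Q : Fin d → Fin d → ℝ) (p q : Fin P) : ℝ :=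
  Real.exp (∑ i, ∑ j, Xt p i * Q i j * Xt q j) /
    ∑ r, Real.exp (∑ i, ∑ j, Xt p i * Q i j * Xt r j)

/-- Transformer output at patch `p`: `F_p(Q) = Σ_q s_{p→q}(Q) · Y_q`. -/
def Fout (Xt Y : Fin P → Fin d → ℝ) (Q : Fin d → Fin d → ℝ) (p : Fin P) :
    Fin d → ℝ :=
  fun i => ∑ q, attScore Xt Q p q * Y q i

/-- Per-sample masked reconstruction loss `ℓ(Q) = (1/2) Σ_{p∈ℳ} ‖F_p(Q) − X_p‖²`. -/
def maeLoss (M : Finset (Fin P)) (X Xt Y : Fin P → Fin d → ℝ)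
    (Q : Fin d → Fin d → ℝ) : ℝ :=
  (1 / 2) * ∑ p ∈ M, ∑ i, (Fout Xt Y Q p i - X p i) ^ 2

/-- Unmasked area attention `A_j(Q) = Σ_{q ∈ 𝒰 ∩ 𝒫_j} s_{p→q}(Q)` of patch `p` to area `j`. -/
def areaAttn (area : Fin P → Fin N) (M : Finset (Fin P)) (Xt : Fin P → Fin d → ℝ)
    (Q : Fin d → Fin d → ℝ) (p : Fin P) (j : Fin N) : ℝ :=
  ∑ q ∈ Finset.univ.filter (fun q => q ∉ M ∧ area q = j), attScore Xt Q p q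

/-!
Differentiate along the line `Q + t H` with `H = e_p v_mᵀ`. By the chain rule and the softmax
derivative `ṡ_q = s_q (b_q - Σ_r s_r b_r)`, the directional derivative of `ℓ` is
`Σ_{p' ∈ ℳ} Σ_q ṡ_{p'→q} ⟨F_{p'} - X_{p'}, Y_q⟩` with `b_{p'q} = X̃_{p'}ᵀ H X̃_q
= (X̃_{p'} · e_p)(v_m · X̃_q)`. The orthogonality relations make `b_{p'q}` vanish unless `p' = p`
and `q` is an unmasked patch of area `m`, where it is `z_m`; and for an unmasked `q` of area `a`
they give `⟨F_p - X_p, Y_q⟩ = z_a (z_a A_a - [a = n] z_n)`. Every term then depends on `q` only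
through its area, so the sum over `q` collapses to `Σ_a A_a (⋯)`, and splitting off `a = m` and
`a = n` gives the formula.
-/

theorem hasDerivAt_exp_div_sum_exp {ι : Type*} [Fintype ι] (L b : ι → ℝ) (q : ι) :
    HasDerivAt (fun t : ℝ => Real.exp (L q + t * b q) / ∑ r, Real.exp (L r + t * b r))
      (Real.exp (L q) / (∑ r, Real.exp (L r)) *
        (b q - ∑ r, Real.exp (L r) / (∑ r', Real.exp (L r')) * b r)) 0 := by
  have hexp : ∀ r, HasDerivAt (fun t : ℝ => Real.exp (L r + t * b r)) (Real.exp (L r) * b r) 0 :=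
    fun r => by simpa using (((hasDerivAt_id (0 : ℝ)).mul_const (b r)).const_add (L r)).exp
  have hS : ∑ r, Real.exp (L r) ≠ 0 :=
    (Finset.sum_pos (fun r _ => Real.exp_pos (L r)) ⟨q, mem_univ q⟩).ne'
  have h := (hexp q).fun_div (HasDerivAt.fun_sum fun r _ => hexp r) (by simpa using hS)
  simp only [zero_mul, add_zero] at h
  refine h.congr_deriv ?_
  rw [Finset.sum_congr rfl fun r _ => div_mul_eq_mul_div (Real.exp (L r)) _ (b r), ← Finset.sum_div]
  field_simp

theorem sum_sum_mul_add_smul_mul {ι κ : Type*} [Fintype ι] [Fintype κ] (x : ι → ℝ) (y : κ → ℝ)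
    (Q H : ι → κ → ℝ) (t : ℝ) :
    ∑ i, ∑ j, x i * (Q + t • H) i j * y j =
      ∑ i, ∑ j, x i * Q i j * y j + t * ∑ i, ∑ j, x i * H i j * y j := by
  simp only [Finset.mul_sum, ← Finset.sum_add_distrib]
  congr! 2
  simp only [Pi.add_apply, Pi.smul_apply, smul_eq_mul]
  ring

theorem sum_sum_mul_rankOne_mul {ι κ : Type*} [Fintype ι] [Fintype κ] (x u : ι → ℝ)
    (w y : κ → ℝ) :
    ∑ i, ∑ j, x i * (u i * w j) * y j = (∑ i, x i * u i) * ∑ j, w j * y j := by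
  rw [Finset.sum_mul_sum]
  exact Finset.sum_congr rfl fun i _ => Finset.sum_congr rfl fun j _ => by ring

theorem hasDerivAt_attScore_add_smul (Xt : Fin P → Fin d → ℝ) (Q H : Fin d → Fin d → ℝ)
    (p q : Fin P) :
    HasDerivAt (fun t : ℝ => attScore Xt (Q + t • H) p q)
      (attScore Xt Q p q * ((∑ i, ∑ j, Xt p i * H i j * Xt q j) -
        ∑ r, attScore Xt Q p r * ∑ i, ∑ j, Xt p i * H i j * Xt r j)) 0 := by
  simp only [attScore, sum_sum_mul_add_smul_mul]
  exact hasDerivAt_exp_div_sum_exp (fun r => ∑ i, ∑ j, Xt p i * Q i j * Xt r j)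
    (fun r => ∑ i, ∑ j, Xt p i * H i j * Xt r j) q

theorem differentiableAt_attScore (Xt : Fin P → Fin d → ℝ) (Q : Fin d → Fin d → ℝ)
    (p q : Fin P) : DifferentiableAt ℝ (fun Q => attScore Xt Q p q) Q := by
  unfold attScore
  fun_prop (disch := exact (Finset.sum_pos (fun r _ => Real.exp_pos _) ⟨q, mem_univ q⟩).ne')

theorem differentiableAt_maeLoss (M : Finset (Fin P)) (X Xt Y : Fin P → Fin d → ℝ)
    (Q : Fin d → Fin d → ℝ) : DifferentiableAt ℝ (maeLoss M X Xt Y) Q := by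
  unfold maeLoss Fout
  have := differentiableAt_attScore Xt Q
  fun_prop

theorem fderiv_maeLoss_apply (M : Finset (Fin P)) (X Xt Y : Fin P → Fin d → ℝ)
    (Q H : Fin d → Fin d → ℝ) :
    fderiv ℝ (maeLoss M X Xt Y) Q H =
      ∑ p ∈ M, ∑ q, attScore Xt Q p q * ((∑ i, ∑ j, Xt p i * H i j * Xt q j) -
          ∑ r, attScore Xt Q p r * ∑ i, ∑ j, Xt p i * H i j * Xt r j) *
        ∑ i, (Fout Xt Y Q p i - X p i) * Y q i := by
  have hline : HasDerivAt (fun t : ℝ => Q + t • H) H 0 := by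
    simpa using ((hasDerivAt_id (0 : ℝ)).smul_const H).const_add Q
  have hloss := (differentiableAt_maeLoss M X Xt Y Q).hasFDerivAt.comp_hasDerivAt_of_eq 0 hline
    (by simp)
  have hFout : ∀ p i, HasDerivAt (fun t : ℝ => Fout Xt Y (Q + t • H) p i)
      (∑ q, attScore Xt Q p q * ((∑ i, ∑ j, Xt p i * H i j * Xt q j) -
          ∑ r, attScore Xt Q p r * ∑ i, ∑ j, Xt p i * H i j * Xt r j) * Y q i) 0 :=
    fun p i => HasDerivAt.fun_sum fun q _ => (hasDerivAt_attScore_add_smul Xt Q H p q).mul_const _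
  have hloss' := ((HasDerivAt.fun_sum (u := M) fun p _ =>
    HasDerivAt.fun_sum (u := univ) fun i _ =>
    ((hFout p i).sub_const (X p i)).pow 2).const_mul (1 / 2 : ℝ))
  rw [hloss.unique hloss']
  simp only [zero_smul, add_zero, Finset.mul_sum]
  refine Finset.sum_congr rfl fun p _ => ?_
  rw [Finset.sum_comm]
  exact Finset.sum_congr rfl fun q _ => Finset.sum_congr rfl fun i _ => by ring

theorem sum_attScore_mul_unmasked (area : Fin P → Fin N) (M : Finset (Fin P))
    (Xt : Fin P → Fin d → ℝ) (Q : Fin d → Fin d → ℝ) (p : Fin P) (g : Fin N → ℝ) :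
    ∑ q, attScore Xt Q p q * (if q ∈ M then 0 else g (area q)) =
      ∑ a, areaAttn area M Xt Q p a * g a := by
  simp only [areaAttn, Finset.sum_mul, Finset.sum_filter]
  rw [Finset.sum_comm]
  refine Finset.sum_congr rfl fun q _ => ?_
  split_ifs with hq <;> simp [hq]

theorem sum_attScore_mul_sub_mul_unmasked (area : Fin P → Fin N) (M : Finset (Fin P))
    (Xt : Fin P → Fin d → ℝ) (Q : Fin d → Fin d → ℝ) (p : Fin P) (b r : Fin N → ℝ) (c : ℝ) :
    ∑ q, attScore Xt Q p q * ((if q ∈ M then 0 else b (area q)) - c) *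
        (if q ∈ M then 0 else r (area q)) =
      ∑ a, areaAttn area M Xt Q p a * ((b a - c) * r a) := by
  rw [← sum_attScore_mul_unmasked]
  refine Finset.sum_congr rfl fun q _ => ?_
  split_ifs <;> ring

theorem sum_attScore_mul_unmasked_area_indicator (area : Fin P → Fin N) (M : Finset (Fin P))
    (Xt : Fin P → Fin d → ℝ) (Q : Fin d → Fin d → ℝ) (p : Fin P) (a : Fin N) (c : ℝ) :
    ∑ q, attScore Xt Q p q * (if q ∈ M then 0 else if area q = a then c else 0) =
      c * areaAttn area M Xt Q p a := by
  refine (sum_attScore_mul_unmasked area M Xt Q p fun b => if b = a then c else 0).trans ?_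
  simp [mul_comm]

section Features

variable {area : Fin P → Fin N} {v : Fin N → Fin d → ℝ} {z : Fin N → ℝ} {e : Fin P → Fin d → ℝ}

theorem sum_mul_Xcol (hv_unit : ∀ n, ∑ i, v n i ^ 2 = 1)
    (hv_orth : ∀ n n', n ≠ n' → ∑ i, v n i * v n' i = 0) (a : Fin N) (q : Fin P) :
    ∑ i, v a i * Xcol area v z q i = if area q = a then z a else 0 := by
  simp only [Xcol, mul_left_comm (v a _), ← Finset.mul_sum]
  split_ifs with ha
  · simp [ha, ← pow_two, hv_unit]
  · rw [hv_orth a (area q) (Ne.symm ha), mul_zero]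

theorem sum_mul_Ycol (hv_unit : ∀ n, ∑ i, v n i ^ 2 = 1)
    (hv_orth : ∀ n n', n ≠ n' → ∑ i, v n i * v n' i = 0) (M : Finset (Fin P))
    (a : Fin N) (q : Fin P) :
    ∑ i, v a i * Ycol M (Xcol area v z) q i =
      if q ∈ M then 0 else if area q = a then z a else 0 := by
  unfold Ycol
  by_cases hq : q ∈ M
  · simp [hq]
  · simpa [hq] using sum_mul_Xcol hv_unit hv_orth a q

theorem sum_mul_Fout (hv_unit : ∀ n, ∑ i, v n i ^ 2 = 1)
    (hv_orth : ∀ n n', n ≠ n' → ∑ i, v n i * v n' i = 0) (M : Finset (Fin P))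
    (Xt : Fin P → Fin d → ℝ) (Q : Fin d → Fin d → ℝ) (p : Fin P) (a : Fin N) :
    ∑ i, v a i * Fout Xt (Ycol M (Xcol area v z)) Q p i = z a * areaAttn area M Xt Q p a := by
  simp only [Fout, Finset.mul_sum]
  rw [Finset.sum_comm]
  simp only [mul_left_comm (v a _) (attScore _ _ _ _), ← Finset.mul_sum]
  simp only [sum_mul_Ycol hv_unit hv_orth, sum_attScore_mul_unmasked_area_indicator]

theorem sum_residual_mul_Ycol (hv_unit : ∀ n, ∑ i, v n i ^ 2 = 1)
    (hv_orth : ∀ n n', n ≠ n' → ∑ i, v n i * v n' i = 0) (M : Finset (Fin P))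
    (Xt : Fin P → Fin d → ℝ) (Q : Fin d → Fin d → ℝ) (p q : Fin P) :
    ∑ i, (Fout Xt (Ycol M (Xcol area v z)) Q p i - Xcol area v z p i) *
        Ycol M (Xcol area v z) q i =
      if q ∈ M then 0 else z (area q) * (z (area q) * areaAttn area M Xt Q p (area q) -
        if area p = area q then z (area q) else 0) := by
  by_cases hq : q ∈ M
  · simp [Ycol, hq]
  have hYq : ∀ i, Ycol M (Xcol area v z) q i = z (area q) * v (area q) i := by
    simp [Ycol, Xcol, hq]
  calc ∑ i, (Fout Xt (Ycol M (Xcol area v z)) Q p i - Xcol area v z p i) *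
        Ycol M (Xcol area v z) q i
      = z (area q) * (∑ i, v (area q) i * Fout Xt (Ycol M (Xcol area v z)) Q p i -
          ∑ i, v (area q) i * Xcol area v z p i) := by
        simp only [hYq, ← Finset.sum_sub_distrib, Finset.mul_sum]
        exact Finset.sum_congr rfl fun i _ => by ring
    _ = _ := by rw [sum_mul_Fout hv_unit hv_orth, sum_mul_Xcol hv_unit hv_orth, if_neg hq]

theorem sum_Ycol_mul_e (hev : ∀ p n, ∑ i, e p i * v n i = 0)
    (M : Finset (Fin P)) (p q : Fin P) : ∑ i, Ycol M (Xcol area v z) q i * e p i = 0 := by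
  by_cases hq : q ∈ M
  · simp [Ycol, hq]
  · simp [Ycol, Xcol, hq, mul_assoc, ← Finset.mul_sum, mul_comm (v _ _) (e p _), hev]

theorem sum_XtCol_mul_e (he_unit : ∀ p, ∑ i, e p i ^ 2 = 1)
    (he_orth : ∀ p q, p ≠ q → ∑ i, e p i * e q i = 0) (hev : ∀ p n, ∑ i, e p i * v n i = 0)
    (M : Finset (Fin P)) (p q : Fin P) :
    ∑ i, XtCol e (Ycol M (Xcol area v z)) q i * e p i = if q = p then 1 else 0 := by
  simp only [XtCol, add_mul, Finset.sum_add_distrib, sum_Ycol_mul_e hev, zero_add]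
  split_ifs with hqp
  · simp [hqp, ← pow_two, he_unit]
  · exact he_orth q p hqp

theorem sum_mul_XtCol (hev : ∀ p n, ∑ i, e p i * v n i = 0)
    (Y : Fin P → Fin d → ℝ) (a : Fin N) (q : Fin P) :
    ∑ i, v a i * XtCol e Y q i = ∑ i, v a i * Y q i := by
  have hve : ∑ i, v a i * e q i = 0 := by simpa only [mul_comm] using hev q a
  simp only [XtCol, mul_add, Finset.sum_add_distrib, hve, add_zero]

end Features

theorem neg_sum_areaAttn_mul_eq {m n : Fin N} (hm : m ≠ n) (A z : Fin N → ℝ) :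
    -∑ a, A a * (((if a = m then z m else 0) - z m * A m) *
        (z a * (z a * A a - if n = a then z a else 0))) =
      A m * ((∑ a ∈ Finset.univ \ {m, n}, z a ^ 2 * z m * A a ^ 2) -
        (z m * z n ^ 2 * (1 - A n) * A n + z m ^ 3 * (1 - A m) * A m)) := by
  have hrest : ∑ a ∈ Finset.univ \ {m, n}, A a * (((if a = m then z m else 0) - z m * A m) *
        (z a * (z a * A a - if n = a then z a else 0))) =
      -(A m * ∑ a ∈ Finset.univ \ {m, n}, z a ^ 2 * z m * A a ^ 2) := by
    rw [Finset.mul_sum, ← Finset.sum_neg_distrib]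
    refine Finset.sum_congr rfl fun a ha => ?_
    obtain ⟨ham, han⟩ : a ≠ m ∧ a ≠ n := by simpa [not_or] using ha
    rw [if_neg ham, if_neg (Ne.symm han)]
    ring
  rw [← Finset.sum_sdiff (Finset.subset_univ {m, n}), Finset.sum_pair hm, hrest]
  simp only [if_pos, if_neg (Ne.symm hm)]
  ring

/-- for a masked patch `p` in area `𝒫_n` and `m ≠ n`,
`e_pᵀ(−∇_Q ℓ(Q))v_m = A_m(Q)·(Σ_{a≠m,n} z_a² z_m A_a(Q)²
  − (z_m z_n²(1−A_n(Q))A_n(Q) + z_m³(1−A_m(Q))A_m(Q)))`. -/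
theorem fp_gradient_other_area (area : Fin P → Fin N) (v : Fin N → Fin d → ℝ)
    (z : Fin N → ℝ) (e : Fin P → Fin d → ℝ)
    (hv_unit : ∀ n, ∑ i, v n i ^ 2 = 1)
    (hv_orth : ∀ n n', n ≠ n' → ∑ i, v n i * v n' i = 0)
    (he_unit : ∀ p, ∑ i, e p i ^ 2 = 1)
    (he_orth : ∀ p q, p ≠ q → ∑ i, e p i * e q i = 0)
    (hev : ∀ p n, ∑ i, e p i * v n i = 0)
    (M : Finset (Fin P)) (Q : Fin d → Fin d → ℝ)
    (p : Fin P) (hp : p ∈ M) (n : Fin N) (hn : area p = n)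
    (m : Fin N) (hm : m ≠ n) :
    (let X := Xcol area v z;
     let Y := Ycol M X;
     let Xt := XtCol e Y;
     let A := areaAttn area M Xt Q p;
     -(fderiv ℝ (maeLoss M X Xt Y) Q (fun i j => e p i * v m j)) =
       A m * ((∑ a ∈ Finset.univ \ {m, n}, z a ^ 2 * z m * A a ^ 2) -
         (z m * z n ^ 2 * (1 - A n) * A n + z m ^ 3 * (1 - A m) * A m))) := by
  intro X Y Xt A
  have hpair : ∀ p' q, ∑ i, ∑ j, Xt p' i * (e p i * v m j) * Xt q j =
      if p' = p then (if q ∈ M then 0 else if area q = m then z m else 0) else 0 := by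
    intro p' q
    rw [sum_sum_mul_rankOne_mul, sum_XtCol_mul_e he_unit he_orth hev, sum_mul_XtCol hev,
      sum_mul_Ycol hv_unit hv_orth]
    split_ifs <;> simp
  have hres : ∀ q, ∑ i, (Fout Xt Y Q p i - X p i) * Y q i = if q ∈ M then 0 else
      z (area q) * (z (area q) * A (area q) - if n = area q then z (area q) else 0) := by
    intro q
    rw [← hn]
    exact sum_residual_mul_Ycol hv_unit hv_orth M Xt Q p q
  rw [fderiv_maeLoss_apply]
  simp only [hpair]
  rw [Finset.sum_eq_single_of_mem p hp fun p' _ hp' => by simp [hp']]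
  simp only [if_true, sum_attScore_mul_unmasked_area_indicator, hres]
  rw [sum_attScore_mul_sub_mul_unmasked area M Xt Q p (fun a => if a = m then z m else 0)
    (fun a => z a * (z a * A a - if n = a then z a else 0))]
  exact neg_sum_areaAttn_mul_eq hm A z
end
end

section
/- Under the single-cluster pointwise setting, let p ∈ ℳ lie in area 𝒫_n and q ∈ 𝒫 lie in a different area 𝒫_m with m ≠ n. Then e_pᵀ(−∇_Q ℓ(Q))e_q = s_{p→q}(Q) · ( Σ_{a≠n} z_a² A_a(Q)² − ( z_n² (1 − A_n(Q)) A_n(Q) + 1{q ∈ 𝒰} · z_m² A_m(Q) ) ), where A_j(Q) = Σ_{r∈𝒰∩𝒫_j} s_{p→r}(Q) and 1{q ∈ 𝒰} is 1 if q is unmasked and 0 otherwise. -/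
/-!
Single-cluster pointwise setting (shared context for Statements 2–6 of the paper):

`𝒫 = Fin P` is partitioned into areas `𝒫_1, …, 𝒫_N` via `area : Fin P → Fin N`
(`𝒫_j = area⁻¹ j`); `v_1, …, v_N ∈ ℝ^d` are pairwise orthogonal unit features;
`z_1, …, z_N ∈ ℝ`; the sample has columns `X_q = z_{area q} v_{area q}`; positional
encodings `e_q` are unit vectors, pairwise orthogonal and orthogonal to every feature;
`ℳ ⊂ 𝒫` is the mask set, `𝒰 = 𝒫 ∖ ℳ`; `Y = mask(X)` zeroes masked columns;
`X̃ = Y + E`; `s_{p→q}(Q)` is the softmax attention on `X̃`;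
`F_p(Q) = Σ_q s_{p→q}(Q) Y_q`; `ℓ(Q) = (1/2) Σ_{p∈ℳ} ‖F_p(Q) − X_p‖²`;
`A_m(Q) = Σ_{q ∈ 𝒰 ∩ 𝒫_m} s_{p→q}(Q)` is the unmasked area attention.

The gradient identities `e_pᵀ(−∇_Q ℓ)v` and `e_pᵀ(−∇_Q ℓ)e_q` are expressed via the
Fréchet derivative of `ℓ` paired against the rank-one directions `e_p vᵀ` resp. `e_p e_qᵀ`
(for a matrix `M` one has `aᵀ M b = ⟨M, a bᵀ⟩_F`).
-/

noncomputable section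

open Finset

variable {d P N : ℕ}

/-! By the chain rule through the softmax, `∂s_{a→r} = s_{a→r} (∂g_{ar} − Σ_{r'} s_{a→r'} ∂g_{ar'})`
with `g_{ar}(Q) = X̃_aᵀ Q X̃_r`. The augmented inputs satisfy `X̃_a ⬝ e_r = δ_{ar}`, so the direction
`e_p e_qᵀ` pairs to `δ_{ap} δ_{rq}` under every `g_{ar}`: only the row `p` survives and the
derivative of the loss is `s_{p→q} ⟨F_p − X_p, Y_q − F_p⟩`. The three vectors lie in the span of the
orthonormal features, with coordinates `(z_a A_a)_a`, `z_n δ_n` and `1{q ∈ 𝒰} z_m δ_m`, so the inner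
product is computed on these coordinate vectors in `ℝ^N`. -/

open scoped Matrix

def softmax {ι : Type*} [Fintype ι] (w : ι → ℝ) (r : ι) : ℝ :=
  Real.exp (w r) / ∑ r', Real.exp (w r')

theorem hasFDerivAt_softmax {E ι : Type*} [NormedAddCommGroup E] [NormedSpace ℝ E]
    [Fintype ι] [Nonempty ι] {g : ι → E → ℝ} {g' : ι → E →L[ℝ] ℝ} {x : E}
    (hg : ∀ r, HasFDerivAt (g r) (g' r) x) (r : ι) :
    HasFDerivAt (fun y => softmax (g · y) r)
      (softmax (g · x) r • (g' r - ∑ r', softmax (g · x) r' • g' r')) x := by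
  have hS : 0 < ∑ r', Real.exp (g r' x) := sum_pos (fun _ _ => Real.exp_pos _) univ_nonempty
  have hinv := (hasDerivAt_inv hS.ne').comp_hasFDerivAt x
    (HasFDerivAt.fun_sum fun r' _ => (hg r').exp)
  refine ((hg r).exp.mul hinv).congr_fderiv ?_
  ext H
  simp only [softmax, add_apply, smul_apply, sub_apply, FunLike.coe_sum, Finset.sum_apply,
    smul_eq_mul, Function.comp_apply, div_mul_eq_mul_div, ← sum_div]
  field_simp
  ring

def scoreForm (u w : Fin d → ℝ) : (Fin d → Fin d → ℝ) →L[ℝ] ℝ :=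
  LinearMap.toContinuousLinearMap
  { toFun := fun Q => ∑ i, ∑ j, u i * Q i j * w j
    map_add' := fun Q R => by simp only [Pi.add_apply, mul_add, add_mul, sum_add_distrib]
    map_smul' := fun c Q => by
      simp only [Pi.smul_apply, smul_eq_mul, mul_sum, RingHom.id_apply]
      exact sum_congr rfl fun i _ => sum_congr rfl fun j _ => by ring }

theorem scoreForm_apply (u w : Fin d → ℝ) (Q : Fin d → Fin d → ℝ) :
    scoreForm u w Q = ∑ i, ∑ j, u i * Q i j * w j := rfl

theorem scoreForm_rankOne (u w a b : Fin d → ℝ) :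
    scoreForm u w (fun i j => a i * b j) = (u ⬝ᵥ a) * (b ⬝ᵥ w) := by
  simp only [scoreForm_apply, dotProduct, sum_mul_sum]
  exact sum_congr rfl fun i _ => sum_congr rfl fun j _ => by ring

def attScoreDeriv (Xt : Fin P → Fin d → ℝ) (Q : Fin d → Fin d → ℝ) (a r : Fin P) :
    (Fin d → Fin d → ℝ) →L[ℝ] ℝ :=
  attScore Xt Q a r •
    (scoreForm (Xt a) (Xt r) - ∑ r', attScore Xt Q a r' • scoreForm (Xt a) (Xt r'))

theorem hasFDerivAt_attScore (Xt : Fin P → Fin d → ℝ) (Q : Fin d → Fin d → ℝ) (a r : Fin P) :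
    HasFDerivAt (fun Q => attScore Xt Q a r) (attScoreDeriv Xt Q a r) Q :=
  haveI : Nonempty (Fin P) := ⟨a⟩
  hasFDerivAt_softmax (fun r' => (scoreForm (Xt a) (Xt r')).hasFDerivAt) r

theorem hasFDerivAt_fout (Xt Y : Fin P → Fin d → ℝ) (Q : Fin d → Fin d → ℝ) (a : Fin P)
    (i : Fin d) :
    HasFDerivAt (fun Q => Fout Xt Y Q a i) (∑ r, Y r i • attScoreDeriv Xt Q a r) Q :=
  HasFDerivAt.fun_sum fun r _ => (hasFDerivAt_attScore Xt Q a r).mul_const (Y r i)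

theorem hasFDerivAt_maeLoss (M : Finset (Fin P)) (X Xt Y : Fin P → Fin d → ℝ)
    (Q : Fin d → Fin d → ℝ) :
    HasFDerivAt (maeLoss M X Xt Y)
      (∑ a ∈ M, ∑ i, (Fout Xt Y Q a i - X a i) • ∑ r, Y r i • attScoreDeriv Xt Q a r) Q := by
  have h := (HasFDerivAt.fun_sum fun a (_ : a ∈ M) =>
    HasFDerivAt.fun_sum fun i (_ : i ∈ univ) =>
      ((hasFDerivAt_fout Xt Y Q a i).sub_const (X a i)).pow 2).const_mul (1 / 2 : ℝ)
  refine h.congr_fderiv ?_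
  simp only [smul_sum, smul_smul]
  refine sum_congr rfl fun a _ => sum_congr rfl fun i _ => sum_congr rfl fun r _ => ?_
  congr 1
  norm_num
  ring

section RankOneDirection

variable {Xt : Fin P → Fin d → ℝ} {Q H : Fin d → Fin d → ℝ} {p q : Fin P}

theorem attScoreDeriv_apply_of_scoreForm_eq_ite
    (hH : ∀ a r, scoreForm (Xt a) (Xt r) H = if a = p ∧ r = q then 1 else 0) (a r : Fin P) :
    attScoreDeriv Xt Q a r H =
      if a = p then attScore Xt Q p r * ((if r = q then 1 else 0) - attScore Xt Q p q) else 0 := by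
  by_cases ha : a = p
  · subst ha
    simp [attScoreDeriv, hH]
  · simp [attScoreDeriv, hH, ha]

theorem fderiv_maeLoss_apply_of_scoreForm_eq_ite {M : Finset (Fin P)} {X Y : Fin P → Fin d → ℝ}
    (hp : p ∈ M) (hH : ∀ a r, scoreForm (Xt a) (Xt r) H = if a = p ∧ r = q then 1 else 0) :
    fderiv ℝ (maeLoss M X Xt Y) Q H =
      attScore Xt Q p q * ((Fout Xt Y Q p - X p) ⬝ᵥ (Y q - Fout Xt Y Q p)) := by
  have hFout : ∀ a i, (∑ r, Y r i • attScoreDeriv Xt Q a r) H =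
      if a = p then attScore Xt Q p q * (Y q i - Fout Xt Y Q p i) else 0 := by
    intro a i
    split_ifs with ha
    · simp only [ha, _root_.sum_apply, smul_apply, attScoreDeriv_apply_of_scoreForm_eq_ite hH,
        ↓reduceIte, mul_sub, mul_ite, mul_one, mul_zero, smul_eq_mul, sum_sub_distrib,
        sum_ite_eq', mem_univ, Fout, mul_sum]
      exact congr_arg₂ (· - ·) (mul_comm _ _) (sum_congr rfl fun r _ => by ring)
    · simp [attScoreDeriv_apply_of_scoreForm_eq_ite hH, ha]
  rw [(hasFDerivAt_maeLoss M X Xt Y Q).fderiv, _root_.sum_apply, sum_eq_single_of_mem p hp]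
  · simp only [_root_.sum_apply, smul_apply, hFout, ↓reduceIte, smul_eq_mul, dotProduct,
      Pi.sub_apply, mul_sum]
    exact sum_congr rfl fun i _ => by ring
  · intro a _ ha
    simp [hFout, ha]

end RankOneDirection

theorem dotProduct_eq_ite_of_orthonormal {ι κ : Type*} [Fintype κ] [DecidableEq ι]
    {u : ι → κ → ℝ} (hunit : ∀ a, ∑ i, u a i ^ 2 = 1)
    (horth : ∀ a b, a ≠ b → ∑ i, u a i * u b i = 0) (a b : ι) :
    u a ⬝ᵥ u b = if a = b then 1 else 0 := by
  split_ifs with h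
  · subst h
    simpa only [dotProduct, sq] using hunit a
  · exact horth a b h

theorem mul_transpose_eq_one_of_orthonormal {ι κ : Type*} [Fintype κ] [DecidableEq ι]
    {u : Matrix ι κ ℝ} (hunit : ∀ a, ∑ i, u a i ^ 2 = 1)
    (horth : ∀ a b, a ≠ b → ∑ i, u a i * u b i = 0) :
    u * uᵀ = 1 := by
  ext a b
  rw [Matrix.mul_apply', Matrix.one_apply]
  exact dotProduct_eq_ite_of_orthonormal hunit horth a b

theorem transpose_mulVec_dotProduct_transpose_mulVec {ι κ : Type*} [Fintype ι] [Fintype κ]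
    [DecidableEq ι] {u : Matrix ι κ ℝ} (hu : u * uᵀ = 1) (x y : ι → ℝ) :
    uᵀ *ᵥ x ⬝ᵥ uᵀ *ᵥ y = x ⬝ᵥ y := by
  rw [Matrix.dotProduct_mulVec, Matrix.vecMul_transpose, Matrix.mulVec_mulVec, hu,
    Matrix.one_mulVec]

section FeatureCoordinates

variable (area : Fin P → Fin N) (v : Fin N → Fin d → ℝ) (z : Fin N → ℝ) (M : Finset (Fin P))

theorem xcol_eq_transpose_mulVec_single (q : Fin P) :
    Xcol area v z q = (Matrix.of v)ᵀ *ᵥ Pi.single (area q) (z (area q)) := by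
  ext i
  simp [Xcol, Matrix.mulVec, dotProduct_single, mul_comm]

theorem ycol_xcol_eq_transpose_mulVec (q : Fin P) :
    Ycol M (Xcol area v z) q =
      (Matrix.of v)ᵀ *ᵥ if q ∈ M then 0 else Pi.single (area q) (z (area q)) := by
  ext i
  split_ifs with hq
  · simp [Ycol, hq]
  · simp [Ycol, hq, xcol_eq_transpose_mulVec_single]

theorem fout_ycol_xcol_eq_transpose_mulVec (Xt : Fin P → Fin d → ℝ) (Q : Fin d → Fin d → ℝ)
    (p : Fin P) :
    Fout Xt (Ycol M (Xcol area v z)) Q p =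
      (Matrix.of v)ᵀ *ᵥ fun a => z a * areaAttn area M Xt Q p a := by
  ext i
  have hunmasked : Fout Xt (Ycol M (Xcol area v z)) Q p i =
      ∑ r ∈ univ.filter (· ∉ M), attScore Xt Q p r * (z (area r) * v (area r) i) := by
    simp only [Fout, Ycol, Xcol, sum_filter, mul_ite, mul_zero, ite_not]
  rw [hunmasked, ← sum_fiberwise _ area]
  simp only [Matrix.mulVec, dotProduct, Matrix.transpose_apply, Matrix.of_apply, areaAttn]
  refine sum_congr rfl fun a _ => ?_
  rw [filter_filter, mul_sum, mul_sum]
  refine sum_congr rfl fun r hr => ?_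
  rw [(mem_filter.mp hr).2.2]
  ring

theorem xtCol_ycol_xcol_dotProduct {e : Fin P → Fin d → ℝ}
    (he : ∀ a r, e a ⬝ᵥ e r = if a = r then 1 else 0)
    (hev : ∀ p n, ∑ i, e p i * v n i = 0) (a r : Fin P) :
    XtCol e (Ycol M (Xcol area v z)) a ⬝ᵥ e r = if a = r then 1 else 0 := by
  have hY : Ycol M (Xcol area v z) a ⬝ᵥ e r = 0 := by
    by_cases ha : a ∈ M
    · simp [Ycol, ha, dotProduct]
    · simp only [Ycol, Xcol, ha, if_false, dotProduct]
      rw [← mul_zero (z (area a)), ← hev r (area a), mul_sum]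
      exact sum_congr rfl fun i _ => by ring
  rw [show XtCol e (Ycol M (Xcol area v z)) a = Ycol M (Xcol area v z) a + e a from rfl,
    add_dotProduct, hY, zero_add, he]

end FeatureCoordinates

/-- for a masked patch `p` in area `𝒫_n` and a patch `q` in a different
area `𝒫_m` (`m ≠ n`),
`e_pᵀ(−∇_Q ℓ(Q))e_q = s_{p→q}(Q)·(Σ_{a≠n} z_a² A_a(Q)²
  − (z_n²(1−A_n(Q))A_n(Q) + 1{q∈𝒰}·z_m² A_m(Q)))`. -/
theorem pp_gradient_other_area (area : Fin P → Fin N) (v : Fin N → Fin d → ℝ)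
    (z : Fin N → ℝ) (e : Fin P → Fin d → ℝ)
    (hv_unit : ∀ n, ∑ i, v n i ^ 2 = 1)
    (hv_orth : ∀ n n', n ≠ n' → ∑ i, v n i * v n' i = 0)
    (he_unit : ∀ p, ∑ i, e p i ^ 2 = 1)
    (he_orth : ∀ p q, p ≠ q → ∑ i, e p i * e q i = 0)
    (hev : ∀ p n, ∑ i, e p i * v n i = 0)
    (M : Finset (Fin P)) (Q : Fin d → Fin d → ℝ)
    (p : Fin P) (hp : p ∈ M) (n : Fin N) (hn : area p = n)
    (q : Fin P) (m : Fin N) (hq : area q = m) (hm : m ≠ n) :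
    (let X := Xcol area v z;
     let Y := Ycol M X;
     let Xt := XtCol e Y;
     let A := areaAttn area M Xt Q p;
     -(fderiv ℝ (maeLoss M X Xt Y) Q (fun i j => e p i * e q j)) =
       attScore Xt Q p q * ((∑ a ∈ Finset.univ \ {n}, z a ^ 2 * A a ^ 2) -
         (z n ^ 2 * (1 - A n) * A n +
           (if q ∉ M then (1 : ℝ) else 0) * z m ^ 2 * A m))) := by
  intro X Y Xt A
  have hV : Matrix.of v * (Matrix.of v)ᵀ = 1 := mul_transpose_eq_one_of_orthonormal hv_unit hv_orth
  have hdual : ∀ a r, scoreForm (Xt a) (Xt r) (fun i j => e p i * e q j) =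
      if a = p ∧ r = q then 1 else 0 := by
    intro a r
    have hXte := xtCol_ycol_xcol_dotProduct area v z M
      (dotProduct_eq_ite_of_orthonormal he_unit he_orth) hev
    rw [scoreForm_rankOne, hXte, dotProduct_comm, hXte, ite_zero_mul_ite_zero, one_mul]
  have hF : Fout Xt Y Q p = (Matrix.of v)ᵀ *ᵥ fun a => z a * A a :=
    fout_ycol_xcol_eq_transpose_mulVec area v z M Xt Q p
  have hXp : X p = _ := xcol_eq_transpose_mulVec_single area v z p
  have hYq : Y q = _ := ycol_xcol_eq_transpose_mulVec area v z M q
  have hAA : (fun a => z a * A a) ⬝ᵥ (fun a => z a * A a) = ∑ a, z a ^ 2 * A a ^ 2 :=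
    sum_congr rfl fun a _ => by ring
  rw [fderiv_maeLoss_apply_of_scoreForm_eq_ite hp hdual, hF, hXp, hYq, ← Matrix.mulVec_sub,
    ← Matrix.mulVec_sub, transpose_mulVec_dotProduct_transpose_mulVec hV,
    sum_sdiff_eq_sub (subset_univ _), sum_singleton, ← mul_neg, hn, hq]
  congr 1
  split_ifs <;>
    simp only [zero_sub, dotProduct_neg, dotProduct_sub, sub_dotProduct, dotProduct_single,
      single_dotProduct, Pi.sub_apply, Pi.single_eq_of_ne hm, sub_zero, hAA] <;>
    ring
end
end

section
/- Under the single-cluster pointwise setting, let p ∈ ℳ lie in area 𝒫_n. Then the squared reconstruction error of patch p decomposes along the orthonormal features as ‖F_p(Q) − X_p‖² = z_n² (1 − A_n(Q))² + Σ_{m≠n} z_m² A_m(Q)², where A_m(Q) = Σ_{q∈𝒰∩𝒫_m} s_{p→q}(Q) is the unmasked area attention of patch p to area 𝒫_m. -/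
/-!
Single-cluster pointwise setting (shared context for Statements 2–6 of the paper):

`𝒫 = Fin P` is partitioned into areas `𝒫_1, …, 𝒫_N` via `area : Fin P → Fin N`
(`𝒫_j = area⁻¹ j`); `v_1, …, v_N ∈ ℝ^d` are pairwise orthogonal unit features;
`z_1, …, z_N ∈ ℝ`; the sample has columns `X_q = z_{area q} v_{area q}`; positional
encodings `e_q` are unit vectors, pairwise orthogonal and orthogonal to every feature;
`ℳ ⊂ 𝒫` is the mask set, `𝒰 = 𝒫 ∖ ℳ`; `Y = mask(X)` zeroes masked columns;
`X̃ = Y + E`; `s_{p→q}(Q)` is the softmax attention on `X̃`;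
`F_p(Q) = Σ_q s_{p→q}(Q) Y_q`; `ℓ(Q) = (1/2) Σ_{p∈ℳ} ‖F_p(Q) − X_p‖²`;
`A_m(Q) = Σ_{q ∈ 𝒰 ∩ 𝒫_m} s_{p→q}(Q)` is the unmasked area attention.

The gradient identities `e_pᵀ(−∇_Q ℓ)v` and `e_pᵀ(−∇_Q ℓ)e_q` are expressed via the
Fréchet derivative of `ℓ` paired against the rank-one directions `e_p vᵀ` resp. `e_p e_qᵀ`
(for a matrix `M` one has `aᵀ M b = ⟨M, a bᵀ⟩_F`).
-/

noncomputable section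

open Finset

variable {d P N : ℕ}

/-!
Only unmasked patches contribute to `F_p(Q)`, and each contributes its feature `z_m v_m`, so
`F_p(Q) = Σ_m A_m(Q) z_m v_m`, while `X_p = z_n v_n`. The residual `F_p(Q) − X_p` therefore has
coordinates `(A_m(Q) − δ_{mn}) z_m` in the orthonormal family `(v_m)`, and its squared norm is
the sum of their squares.
-/

lemma orthonormal_toLp_of_sum {ι κ : Type*} [Fintype κ] (v : ι → κ → ℝ)
    (hv_unit : ∀ m, ∑ i, v m i ^ 2 = 1)
    (hv_orth : ∀ m m', m ≠ m' → ∑ i, v m i * v m' i = 0) :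
    Orthonormal ℝ fun m => WithLp.toLp 2 (v m) := by
  classical
  rw [orthonormal_iff_ite]
  intro m m'
  simp only [PiLp.inner_apply, RCLike.inner_apply, conj_trivial]
  split_ifs with h
  · subst h
    simpa [sq] using hv_unit m
  · simpa [mul_comm] using hv_orth m m' h

lemma sum_sq_sum_mul_of_orthonormal {ι κ : Type*} [Fintype ι] [Fintype κ] {v : ι → κ → ℝ}
    (hv : Orthonormal ℝ fun m => WithLp.toLp 2 (v m)) (c : ι → ℝ) :
    ∑ i, (∑ m, c m * v m i) ^ 2 = ∑ m, c m ^ 2 := by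
  have h := hv.inner_sum c c univ
  rw [real_inner_self_eq_norm_sq, EuclideanSpace.real_norm_sq_eq] at h
  simpa [sq] using h

lemma Fout_Ycol_Xcol (area : Fin P → Fin N) (v : Fin N → Fin d → ℝ)
    (z : Fin N → ℝ) (M : Finset (Fin P)) (Xt : Fin P → Fin d → ℝ) (Q : Fin d → Fin d → ℝ)
    (p : Fin P) (i : Fin d) :
    Fout Xt (Ycol M (Xcol area v z)) Q p i =
      ∑ m, areaAttn area M Xt Q p m * z m * v m i := by
  have h_unmasked : Fout Xt (Ycol M (Xcol area v z)) Q p i =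
      ∑ q ∈ univ.filter (· ∉ M), attScore Xt Q p q * (z (area q) * v (area q) i) := by
    rw [Fout, sum_filter]
    refine sum_congr rfl fun q _ => ?_
    by_cases hq : q ∈ M <;> simp [Ycol, Xcol, hq]
  rw [h_unmasked, ← sum_fiberwise _ area]
  refine sum_congr rfl fun m _ => ?_
  rw [areaAttn, filter_filter, sum_mul, sum_mul]
  refine sum_congr rfl fun q hq => ?_
  rw [(mem_filter.mp hq).2.2, mul_assoc]

theorem reconstruction_error_decomposition_general (area : Fin P → Fin N)
    (v : Fin N → Fin d → ℝ) (z : Fin N → ℝ) (e : Fin P → Fin d → ℝ)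
    (hv_unit : ∀ n, ∑ i, v n i ^ 2 = 1)
    (hv_orth : ∀ n n', n ≠ n' → ∑ i, v n i * v n' i = 0)
    (M : Finset (Fin P)) (Q : Fin d → Fin d → ℝ)
    (p : Fin P) (n : Fin N) (hn : area p = n) :
    (let X := Xcol area v z;
     let Y := Ycol M X;
     let Xt := XtCol e Y;
     let A := areaAttn area M Xt Q p;
     ∑ i, (Fout Xt Y Q p i - X p i) ^ 2 =
       z n ^ 2 * (1 - A n) ^ 2 + ∑ m ∈ Finset.univ \ {n}, z m ^ 2 * A m ^ 2) := by
  intro X Y Xt A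
  have h_residual : ∀ i, Fout Xt Y Q p i - X p i =
      ∑ m, ((A m - if m = n then 1 else 0) * z m) * v m i := by
    intro i
    have h_target : X p i = ∑ m, (if m = n then 1 else 0) * z m * v m i := by
      simp [X, Xcol, hn, ite_mul]
    rw [Fout_Ycol_Xcol, h_target, ← sum_sub_distrib]
    exact sum_congr rfl fun m _ => by ring
  rw [sum_congr rfl fun i _ => by rw [h_residual i],
    sum_sq_sum_mul_of_orthonormal (orthonormal_toLp_of_sum v hv_unit hv_orth),
    sum_eq_add_sum_sdiff_singleton_of_mem (mem_univ n), if_pos rfl]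
  congr 1
  · ring
  · refine sum_congr rfl fun m hm => ?_
    rw [if_neg (by simpa using hm)]
    ring

/-- for a masked patch `p` in area `𝒫_n`, the squared reconstruction error
decomposes along the orthonormal features as
`‖F_p(Q) − X_p‖² = z_n²(1−A_n(Q))² + Σ_{m≠n} z_m² A_m(Q)²`. -/
theorem reconstruction_error_decomposition (area : Fin P → Fin N)
    (v : Fin N → Fin d → ℝ) (z : Fin N → ℝ) (e : Fin P → Fin d → ℝ)
    (hv_unit : ∀ n, ∑ i, v n i ^ 2 = 1)
    (hv_orth : ∀ n n', n ≠ n' → ∑ i, v n i * v n' i = 0)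
    (he_unit : ∀ p, ∑ i, e p i ^ 2 = 1)
    (he_orth : ∀ p q, p ≠ q → ∑ i, e p i * e q i = 0)
    (hev : ∀ p n, ∑ i, e p i * v n i = 0)
    (M : Finset (Fin P)) (Q : Fin d → Fin d → ℝ)
    (p : Fin P) (hp : p ∈ M) (n : Fin N) (hn : area p = n) :
    (let X := Xcol area v z;
     let Y := Ycol M X;
     let Xt := XtCol e Y;
     let A := areaAttn area M Xt Q p;
     ∑ i, (Fout Xt Y Q p i - X p i) ^ 2 =
       z n ^ 2 * (1 - A n) ^ 2 + ∑ m ∈ Finset.univ \ {n}, z m ^ 2 * A m ^ 2) :=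
  reconstruction_error_decomposition_general area v z e hv_unit hv_orth M Q p n hn
end
end
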